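/- arXiv:2504.06820 — 4 statements merged into one kernel-verified Lean document; each statement's English description precedes it below -/
import Mathlib

section
/- Let X be a nonempty compact convex Polish space, Y a Polish space, and f : X × Y → ℝ continuous on the product and strictly convex in its first argument for every fixed y. Then the map sending y to the unique minimizer argmin_{x ∈ X} f(x,y) is continuous. -/
/-!
Strict convexity makes the minimizer `g y` unique, so the graph of `g` is the set of pairs
`(y, x)` with `x` minimizing `f · y` on `X`; by continuity of `f` this set is closed. A map
into a compact space with closed graph is continuous, because projecting along a compact
factor is a closed map.
-/

open Set

theorem continuous_of_isClosed_graph_of_compactSpace {α β : Type*} [TopologicalSpace α]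
    [TopologicalSpace β] [CompactSpace β] {G : α → β}
    (hG : IsClosed {p : α × β | p.2 = G p.1}) : Continuous G := by
  refine continuous_iff_isClosed.2 fun C hC => ?_
  have hpre : G ⁻¹' C = Prod.fst '' ({p : α × β | p.2 = G p.1} ∩ Prod.snd ⁻¹' C) := by
    ext a
    constructor
    · intro ha
      exact ⟨(a, G a), ⟨rfl, ha⟩, rfl⟩
    · rintro ⟨p, ⟨hp, hpC⟩, rfl⟩
      exact (hp ▸ hpC : G p.1 ∈ C)
  rw [hpre]
  exact isClosedMap_fst_of_compactSpace _ (hG.inter (hC.preimage continuous_snd))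

theorem continuous_of_isMinOn_unique {E Y β : Type*} [TopologicalSpace E] [TopologicalSpace Y]
    [TopologicalSpace β] [Preorder β] [OrderClosedTopology β]
    {X : Set E} (hcomp : IsCompact X) {f : E → Y → β}
    (hf : ContinuousOn (fun p : E × Y => f p.1 p.2) (X ×ˢ univ))
    {g : Y → E} (hgX : ∀ y, g y ∈ X) (hgmin : ∀ y, IsMinOn (f · y) X (g y))
    (hguniq : ∀ y, ∀ x ∈ X, IsMinOn (f · y) X x → x = g y) : Continuous g := by
  have : CompactSpace X := isCompact_iff_compactSpace.mp hcomp
  set G : Y → X := fun y => ⟨g y, hgX y⟩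
  have hfXY : ∀ x ∈ X, Continuous fun p : Y × X => f x p.1 := fun x hx =>
    hf.comp_continuous (continuous_const.prodMk continuous_fst) fun _ => ⟨hx, mem_univ _⟩
  have hfdiag : Continuous fun p : Y × X => f p.2 p.1 :=
    hf.comp_continuous ((continuous_subtype_val.comp continuous_snd).prodMk continuous_fst)
      fun p => ⟨p.2.2, mem_univ _⟩
  have hgraph : {p : Y × X | p.2 = G p.1} = ⋂ x ∈ X, {p | f p.2 p.1 ≤ f x p.1} := by
    ext ⟨y, x⟩
    simp only [mem_ofPred_eq, mem_iInter]
    constructor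
    · rintro rfl
      exact hgmin y
    · exact fun hx => Subtype.ext (hguniq y x x.2 hx)
  have hG : Continuous G := by
    refine continuous_of_isClosed_graph_of_compactSpace ?_
    rw [hgraph]
    exact isClosed_biInter fun x hx => isClosed_le hfdiag (hfXY x hx)
  exact continuous_subtype_val.comp hG

theorem stmt1_general {E Y : Type*} [AddCommGroup E] [Module ℝ E] [TopologicalSpace E]
    [TopologicalSpace Y]
    (X : Set E) (hcomp : IsCompact X) (hconv : Convex ℝ X)
    (f : E → Y → ℝ)
    (hf : ContinuousOn (fun p : E × Y => f p.1 p.2) (X ×ˢ Set.univ))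
    (hstrict : ∀ y : Y, ∀ x ∈ X, ∀ x' ∈ X, x ≠ x' → ∀ t : ℝ, 0 < t → t < 1 →
      f (t • x + (1 - t) • x') y < t * f x y + (1 - t) * f x' y)
    (g : Y → E)
    (hg : ∀ y, g y ∈ X ∧ ∀ x ∈ X, f (g y) y ≤ f x y) :
    Continuous g := by
  have hstrictConvex : ∀ y, StrictConvexOn ℝ X (f · y) := fun y =>
    ⟨hconv, fun x hx x' hx' hxx' a b ha hb hab => by
      obtain rfl : b = 1 - a := by linarith
      exact hstrict y x hx x' hx' hxx' a ha (by linarith)⟩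
  have hgmin : ∀ y, IsMinOn (f · y) X (g y) := fun y => isMinOn_iff.2 (hg y).2
  exact continuous_of_isMinOn_unique hcomp hf (fun y => (hg y).1) hgmin
    fun y x hx hx_min => (hstrictConvex y).eq_of_isMinOn hx_min (hgmin y) hx (hg y).1

/-- The argmin of a jointly continuous function that is strictly convex
in its first argument (over a nonempty compact convex Polish set) is continuous in the
second argument. -/
theorem stmt1 {E Y : Type*} [AddCommGroup E] [Module ℝ E] [TopologicalSpace E]
    [IsTopologicalAddGroup E] [ContinuousSMul ℝ E]
    [TopologicalSpace Y] [PolishSpace Y]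
    (X : Set E) (hne : X.Nonempty) (hcomp : IsCompact X) (hconv : Convex ℝ X)
    [PolishSpace X]
    (f : E → Y → ℝ)
    (hf : ContinuousOn (fun p : E × Y => f p.1 p.2) (X ×ˢ Set.univ))
    (hstrict : ∀ y : Y, ∀ x ∈ X, ∀ x' ∈ X, x ≠ x' → ∀ t : ℝ, 0 < t → t < 1 →
      f (t • x + (1 - t) • x') y < t * f x y + (1 - t) * f x' y)
    (g : Y → E)
    (hg : ∀ y, g y ∈ X ∧ ∀ x ∈ X, f (g y) y ≤ f x y) :
    Continuous g :=
  stmt1_general X hcomp hconv f hf hstrict g hg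
end

section
/- Let O be a finite set and Ψ a nonempty closed convex subset of probability distributions on O. Then the function ν ↦ min_{μ∈Ψ} D²_H(μ, ν), defined on probability distributions ν with full support, is convex in ν. -/
/-- Squared Hellinger distance between distributions on a finite set. -/
noncomputable def sqH {O : Type*} [Fintype O] (μ ν : O → ℝ) : ℝ :=
  1 - ∑ o, Real.sqrt (μ o * ν o)

/-- Concavity of the geometric mean (Cauchy–Schwarz step). -/
lemma geo_concave (a b c d p : ℝ) (ha : 0 ≤ a) (hb : 0 ≤ b) (hc : 0 ≤ c) (hd : 0 ≤ d)
    (hp0 : 0 ≤ p) (hp1 : p ≤ 1) :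
    p * Real.sqrt (a * c) + (1 - p) * Real.sqrt (b * d) ≤
      Real.sqrt ((p * a + (1 - p) * b) * (p * c + (1 - p) * d)) := by
  have h1p : (0:ℝ) ≤ 1 - p := by linarith
  set s := Real.sqrt (a * c) with hs_def
  set t := Real.sqrt (b * d) with ht_def
  have hs0 : 0 ≤ s := Real.sqrt_nonneg _
  have ht0 : 0 ≤ t := Real.sqrt_nonneg _
  have hs : s ^ 2 = a * c := Real.sq_sqrt (mul_nonneg ha hc)
  have ht : t ^ 2 = b * d := Real.sq_sqrt (mul_nonneg hb hd)
  have hL : 0 ≤ p * s + (1 - p) * t :=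
    add_nonneg (mul_nonneg hp0 hs0) (mul_nonneg h1p ht0)
  have key : 2 * (s * t) ≤ a * d + b * c := by
    have h1 : s * t = Real.sqrt (a * d) * Real.sqrt (b * c) := by
      rw [hs_def, ht_def, ← Real.sqrt_mul (mul_nonneg ha hc),
        ← Real.sqrt_mul (mul_nonneg ha hd)]
      ring_nf
    have h2 : 2 * (Real.sqrt (a * d) * Real.sqrt (b * c)) ≤
        Real.sqrt (a * d) ^ 2 + Real.sqrt (b * c) ^ 2 := by
      nlinarith [sq_nonneg (Real.sqrt (a * d) - Real.sqrt (b * c))]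
    rw [h1]
    calc 2 * (Real.sqrt (a * d) * Real.sqrt (b * c)) ≤ _ := h2
      _ = a * d + b * c := by
        rw [Real.sq_sqrt (mul_nonneg ha hd), Real.sq_sqrt (mul_nonneg hb hc)]
  rw [show Real.sqrt ((p * a + (1 - p) * b) * (p * c + (1 - p) * d)) =
      Real.sqrt ((p * a + (1 - p) * b) * (p * c + (1 - p) * d)) from rfl]
  refine (Real.le_sqrt hL (by positivity)).mpr ?_
  nlinarith [mul_nonneg hp0 h1p, key, hs, ht]

/-- Joint convexity of the squared Hellinger distance. -/
lemma sqH_joint {O : Type*} [Fintype O] (μ₁ μ₂ ν ν' : O → ℝ)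
    (hμ₁ : ∀ o, 0 ≤ μ₁ o) (hμ₂ : ∀ o, 0 ≤ μ₂ o)
    (hν : ∀ o, 0 ≤ ν o) (hν' : ∀ o, 0 ≤ ν' o)
    (p : ℝ) (hp0 : 0 ≤ p) (hp1 : p ≤ 1) :
    sqH (p • μ₁ + (1 - p) • μ₂) (p • ν + (1 - p) • ν') ≤
      p * sqH μ₁ ν + (1 - p) * sqH μ₂ ν' := by
  unfold sqH
  have hsum : ∑ o, (p * Real.sqrt (μ₁ o * ν o) + (1 - p) * Real.sqrt (μ₂ o * ν' o)) ≤
      ∑ o, Real.sqrt ((p • μ₁ + (1 - p) • μ₂) o * (p • ν + (1 - p) • ν') o) := by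
    apply Finset.sum_le_sum
    intro o _
    simpa [Pi.add_apply, Pi.smul_apply, smul_eq_mul] using
      geo_concave (μ₁ o) (μ₂ o) (ν o) (ν' o) p (hμ₁ o) (hμ₂ o) (hν o) (hν' o) hp0 hp1
  rw [Finset.sum_add_distrib, ← Finset.mul_sum, ← Finset.mul_sum] at hsum
  ring_nf
  ring_nf at hsum
  linarith

/-- ν ↦ min_{μ∈Ψ} D²_H(μ, ν) is convex on full-support distributions. -/
theorem stmt4 {O : Type*} [Fintype O] (Ψ : Set (O → ℝ))
    (hne : Ψ.Nonempty) (hcl : IsClosed Ψ) (hconv : Convex ℝ Ψ)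
    (hsub : ∀ q ∈ Ψ, (∀ o, 0 ≤ q o) ∧ ∑ o, q o = 1)
    (ν ν' : O → ℝ)
    (hν : (∀ o, 0 < ν o) ∧ ∑ o, ν o = 1)
    (hν' : (∀ o, 0 < ν' o) ∧ ∑ o, ν' o = 1)
    (p : ℝ) (hp0 : 0 ≤ p) (hp1 : p ≤ 1) :
    (⨅ μ : Ψ, sqH (μ : O → ℝ) (p • ν + (1 - p) • ν')) ≤
      p * (⨅ μ : Ψ, sqH (μ : O → ℝ) ν) +
        (1 - p) * (⨅ μ : Ψ, sqH (μ : O → ℝ) ν') := by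
  have h1p : (0:ℝ) ≤ 1 - p := by linarith
  haveI : Nonempty Ψ := hne.to_subtype
  -- bounded below
  have hbdd : BddBelow (Set.range fun μ : Ψ => sqH (μ : O → ℝ) (p • ν + (1 - p) • ν')) := by
    refine ⟨1 - Fintype.card O, ?_⟩
    rintro _ ⟨μ, rfl⟩
    have hs : ∑ o, Real.sqrt ((μ : O → ℝ) o * (p • ν + (1 - p) • ν') o) ≤
        ∑ _o : O, (1:ℝ) := by
      apply Finset.sum_le_sum
      intro o _
      rw [show (1:ℝ) = Real.sqrt 1 from Real.sqrt_one.symm]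
      apply Real.sqrt_le_sqrt
      have hμnn := (hsub μ μ.2).1
      have hμsum := (hsub μ μ.2).2
      have hμle : (μ : O → ℝ) o ≤ 1 := by
        rw [← hμsum]
        exact Finset.single_le_sum (fun i _ => hμnn i) (Finset.mem_univ o)
      have hνple : (p • ν + (1 - p) • ν') o ≤ 1 := by
        have hνp_nn : ∀ i, 0 ≤ (p • ν + (1 - p) • ν') i := fun i =>
          add_nonneg (mul_nonneg hp0 (hν.1 i).le) (mul_nonneg h1p (hν'.1 i).le)
        have : ∑ i, (p • ν + (1 - p) • ν') i = 1 := by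
          simp only [Pi.add_apply, Pi.smul_apply, smul_eq_mul]
          rw [Finset.sum_add_distrib, ← Finset.mul_sum, ← Finset.mul_sum, hν.2, hν'.2]
          ring
        exact (Finset.single_le_sum (fun i _ => hνp_nn i) (Finset.mem_univ o)).trans this.le
      have := mul_le_one₀ hμle (add_nonneg (mul_nonneg hp0 (hν.1 o).le)
        (mul_nonneg h1p (hν'.1 o).le)) hνple
      simpa using this
    have hs' : ∑ o, Real.sqrt ((μ : O → ℝ) o * (p • ν + (1 - p) • ν') o) ≤
        (Fintype.card O : ℝ) := by simpa using hs
    simp only [sqH]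
    linarith
  have key : ∀ μ₁ μ₂ : Ψ,
      (⨅ μ : Ψ, sqH (μ : O → ℝ) (p • ν + (1 - p) • ν')) ≤
        p * sqH (μ₁ : O → ℝ) ν + (1 - p) * sqH (μ₂ : O → ℝ) ν' := by
    intro μ₁ μ₂
    have hmem : p • (μ₁ : O → ℝ) + (1 - p) • (μ₂ : O → ℝ) ∈ Ψ :=
      hconv μ₁.2 μ₂.2 hp0 h1p (by ring)
    calc (⨅ μ : Ψ, sqH (μ : O → ℝ) (p • ν + (1 - p) • ν'))
        ≤ sqH (p • (μ₁ : O → ℝ) + (1 - p) • (μ₂ : O → ℝ)) (p • ν + (1 - p) • ν') :=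
          ciInf_le hbdd (⟨_, hmem⟩ : Ψ)
      _ ≤ p * sqH (μ₁ : O → ℝ) ν + (1 - p) * sqH (μ₂ : O → ℝ) ν' :=
          sqH_joint _ _ _ _ (hsub μ₁ μ₁.2).1 (hsub μ₂ μ₂.2).1
            (fun o => (hν.1 o).le) (fun o => (hν'.1 o).le) p hp0 hp1
  rw [Real.mul_iInf_of_nonneg hp0, Real.mul_iInf_of_nonneg h1p]
  exact le_ciInf_add_ciInf key
end

section
/- Let O be a finite set, μ_* a full-support probability distribution on O that minimizes the squared Hellinger distance to a full-support distribution ξ within a closed convex set Ψ, and let θ ∈ Ψ. Then E_{o∼θ}[sqrt(ξ(o)/μ_*(o))] ≤ 1 − D²_H(μ_*, ξ) + D²_H(μ_*, ξ)·0 ≤ 1, and consequently −ln(E_{o∼θ}[sqrt(ξ(o)/μ_*(o))]) ≥ D²_H(μ_*, ξ). -/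
open Finset Real

section
variable {O : Type*} [Fintype O]

lemma sqH_nonneg {μ ν : O → ℝ} (hμ : ∀ o, 0 ≤ μ o) (hμ1 : ∑ o, μ o = 1)
    (hν : ∀ o, 0 ≤ ν o) (hν1 : ∑ o, ν o = 1) : 0 ≤ sqH μ ν := by
  have hamgm : ∀ o, √(μ o * ν o) ≤ (μ o + ν o) / 2 := fun o => by
    rw [sqrt_mul (hμ o)]
    nlinarith [two_mul_le_add_sq √(μ o) √(ν o), sq_sqrt (hμ o), sq_sqrt (hν o)]
  have hsum := sum_le_sum fun o (_ : o ∈ univ) => hamgm o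
  rw [← sum_div, sum_add_distrib, hμ1, hν1] at hsum
  rw [sqH]
  linarith

lemma mul_sqrt_div_eq_sqrt_mul {m x : ℝ} (hm : 0 < m) : m * √(x / m) = √(m * x) := by
  rw [← sqrt_sq hm.le, ← sqrt_mul (sq_nonneg m), sqrt_sq hm.le]
  congr 1
  field_simp

lemma hasFDerivAt_sum_sqrt_mul {μ ξ : O → ℝ} (hμ : ∀ o, 0 < μ o) (hξ : ∀ o, 0 ≤ ξ o) :
    HasFDerivAt (fun ν : O → ℝ => ∑ o, √(ν o * ξ o))
      (∑ o, (√(ξ o / μ o) / 2) • ContinuousLinearMap.proj (R := ℝ) (φ := fun _ : O => ℝ) o) μ := by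
  refine HasFDerivAt.fun_sum fun o _ => ?_
  simp_rw [sqrt_mul' _ (hξ o)]
  refine (((hasFDerivAt_apply o μ).sqrt (hμ o).ne').mul_const √(ξ o)).congr_fderiv ?_
  rw [smul_smul, sqrt_div' _ (hμ o).le]
  field_simp

lemma sum_mul_sqrt_div_le_one_sub_sqH {Ψ : Set (O → ℝ)} (hconv : Convex ℝ Ψ) {ξ μ θ : O → ℝ}
    (hξ : ∀ o, 0 ≤ ξ o) (hμΨ : μ ∈ Ψ) (hμ : ∀ o, 0 < μ o)
    (hmin : ∀ μ' ∈ Ψ, sqH μ ξ ≤ sqH μ' ξ) (hθ : θ ∈ Ψ) :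
    ∑ o, θ o * √(ξ o / μ o) ≤ 1 - sqH μ ξ := by
  have hmax : IsLocalMaxOn (fun ν : O → ℝ => ∑ o, √(ν o * ξ o)) Ψ μ :=
    IsMaxOn.localize fun ν hν => by simpa only [Set.mem_ofPred_eq, sqH, sub_le_sub_iff_left] using hmin ν hν
  have hderiv := hmax.hasFDerivWithinAt_nonpos (hasFDerivAt_sum_sqrt_mul hμ hξ).hasFDerivWithinAt
    (sub_mem_posTangentConeAt_of_segment_subset (hconv.segment_subset hμΨ hθ))
  simp only [FunLike.coe_sum, FunLike.coe_smul, Finset.sum_apply,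
    Pi.smul_apply, ContinuousLinearMap.proj_apply, Pi.sub_apply, smul_eq_mul] at hderiv
  have hdir : ∑ o, √(ξ o / μ o) / 2 * (θ o - μ o)
      = (∑ o, θ o * √(ξ o / μ o) - ∑ o, μ o * √(ξ o / μ o)) / 2 := by
    rw [← sum_sub_distrib, sum_div]
    exact sum_congr rfl fun o _ => by ring
  rw [sqH, sub_sub_cancel, ← sum_congr rfl fun o _ => mul_sqrt_div_eq_sqrt_mul (hμ o)]
  linarith

lemma sum_mul_pos_of_sum_eq_one {θ w : O → ℝ} (hθ : ∀ o, 0 ≤ θ o) (hθ1 : ∑ o, θ o = 1)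
    (hw : ∀ o, 0 < w o) : 0 < ∑ o, θ o * w o := by
  obtain ⟨o, -, ho⟩ := exists_lt_of_sum_lt (s := univ) (f := 0) (g := θ) (by simp [hθ1])
  exact sum_pos' (fun i _ => mul_nonneg (hθ i) (hw i).le) ⟨o, mem_univ o, mul_pos ho (hw o)⟩

end

theorem stmt9_general {O : Type*} [Fintype O] (Ψ : Set (O → ℝ))
    (hconv : Convex ℝ Ψ)
    (hsub : ∀ q ∈ Ψ, (∀ o, 0 ≤ q o) ∧ ∑ o, q o = 1)
    (ξ : O → ℝ) (hξ : (∀ o, 0 < ξ o) ∧ ∑ o, ξ o = 1)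
    (μs : O → ℝ) (hμΨ : μs ∈ Ψ) (hμfull : ∀ o, 0 < μs o)
    (hmin : ∀ μ' ∈ Ψ, sqH μs ξ ≤ sqH μ' ξ)
    (θ : O → ℝ) (hθ : θ ∈ Ψ) :
    (∑ o, θ o * Real.sqrt (ξ o / μs o)) ≤ 1 - sqH μs ξ ∧
    (∑ o, θ o * Real.sqrt (ξ o / μs o)) ≤ 1 ∧
    sqH μs ξ ≤ -Real.log (∑ o, θ o * Real.sqrt (ξ o / μs o)) := by
  obtain ⟨hξpos, hξsum⟩ := hξ
  obtain ⟨hθnn, hθsum⟩ := hsub θ hθ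
  obtain ⟨hμnn, hμsum⟩ := hsub μs hμΨ
  have hfirst := sum_mul_sqrt_div_le_one_sub_sqH hconv (fun o => (hξpos o).le) hμΨ hμfull hmin hθ
  have hsqH := sqH_nonneg hμnn hμsum (fun o => (hξpos o).le) hξsum
  have hpos := sum_mul_pos_of_sum_eq_one hθnn hθsum
    fun o => sqrt_pos.mpr (div_pos (hξpos o) (hμfull o))
  refine ⟨hfirst, by linarith, ?_⟩
  linarith [log_le_sub_one_of_pos hpos]

/-- If μ_* is a full-support Hellinger projection of the full-support
distribution ξ onto the closed convex set Ψ, and θ ∈ Ψ, then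
E_{o∼θ}[√(ξ(o)/μ_*(o))] ≤ 1 − D²_H(μ_*, ξ) ≤ 1, and consequently
−ln(E_{o∼θ}[√(ξ(o)/μ_*(o))]) ≥ D²_H(μ_*, ξ). -/
theorem stmt9 {O : Type*} [Fintype O] (Ψ : Set (O → ℝ))
    (hne : Ψ.Nonempty) (hcl : IsClosed Ψ) (hconv : Convex ℝ Ψ)
    (hsub : ∀ q ∈ Ψ, (∀ o, 0 ≤ q o) ∧ ∑ o, q o = 1)
    (ξ : O → ℝ) (hξ : (∀ o, 0 < ξ o) ∧ ∑ o, ξ o = 1)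
    (μs : O → ℝ) (hμΨ : μs ∈ Ψ) (hμfull : ∀ o, 0 < μs o)
    (hmin : ∀ μ' ∈ Ψ, sqH μs ξ ≤ sqH μ' ξ)
    (θ : O → ℝ) (hθ : θ ∈ Ψ) :
    (∑ o, θ o * Real.sqrt (ξ o / μs o)) ≤ 1 - sqH μs ξ ∧
    (∑ o, θ o * Real.sqrt (ξ o / μs o)) ≤ 1 ∧
    sqH μs ξ ≤ -Real.log (∑ o, θ o * Real.sqrt (ξ o / μs o)) :=
  stmt9_general Ψ hconv hsub ξ hξ μs hμΨ hμfull hmin θ hθ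
end

section
/- Let μ be a probability distribution on {0,1}×S for a finite set S, and for f : S → [0,1], c ∈ [0,1] define Ψ_{f,c} = {ν ∈ Δ({0,1}×S) : E_{(r,s)∼ν}[f(s)+r] ≥ c}. Let ⌈f⌉(s) = 1 − ⌊(1−f(s))/ε₁⌋·ε₁ and ⌊c⌋ = ⌊c/ε₂⌋·ε₂ for ε₁, ε₂ > 0. Then the asymmetric squared Hellinger distance satisfies D²_H(Ψ_{⌈f⌉,⌊c⌋} → Ψ_{f,c}) ≤ ε₁ + ε₂. -/
/-- Asymmetric squared Hellinger distance between sets of distributions. -/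
noncomputable def asymSqH {O : Type*} [Fintype O] (Ψ Φ : Set (O → ℝ)) : ℝ :=
  ⨆ μ : Ψ, ⨅ ν : Φ, sqH (μ : O → ℝ) (ν : O → ℝ)

/-- The halfspace belief Ψ_{f,c} ⊆ Δ({0,1}×S). -/
def PsiSet {S : Type*} [Fintype S] (f : S → ℝ) (c : ℝ) : Set (Bool × S → ℝ) :=
  {ν | (∀ x, 0 ≤ ν x) ∧ (∑ x, ν x = 1) ∧
    c ≤ ∑ x : Bool × S, ν x * (f x.2 + if x.1 then 1 else 0)}

/-- sqH between two distributions is nonnegative. -/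
lemma sqH_nonneg_aux {O : Type*} [Fintype O] (ρ ν : O → ℝ)
    (hρ : ∀ x, 0 ≤ ρ x) (hρ1 : ∑ x, ρ x = 1)
    (hν : ∀ x, 0 ≤ ν x) (hν1 : ∑ x, ν x = 1) : 0 ≤ sqH ρ ν := by
  have key : ∑ x, Real.sqrt (ρ x * ν x) ≤ ∑ x, (ρ x + ν x) / 2 := by
    refine Finset.sum_le_sum fun x _ => ?_
    rw [Real.sqrt_mul (hρ x)]
    nlinarith [sq_nonneg (Real.sqrt (ρ x) - Real.sqrt (ν x)),
      Real.sq_sqrt (hρ x), Real.sq_sqrt (hν x)]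
  have : ∑ x, (ρ x + ν x) / 2 = 1 := by
    rw [← Finset.sum_div, Finset.sum_add_distrib, hρ1, hν1]; norm_num
  unfold sqH; linarith [key, this]

/-- discretizing the halfspace parameters costs at most ε₁ + ε₂ in
asymmetric squared Hellinger distance: D²_H(Ψ_{⌈f⌉,⌊c⌋} → Ψ_{f,c}) ≤ ε₁ + ε₂. -/
theorem stmt12 {S : Type*} [Fintype S] [Nonempty S]
    (ε₁ ε₂ : ℝ) (h1 : 0 < ε₁) (h2 : 0 < ε₂)
    (f : S → ℝ) (hf : ∀ s, f s ∈ Set.Icc (0 : ℝ) 1)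
    (c : ℝ) (hc : c ∈ Set.Icc (0 : ℝ) 1) :
    asymSqH
      (PsiSet (fun s => 1 - (⌊(1 - f s) / ε₁⌋ : ℝ) * ε₁) ((⌊c / ε₂⌋ : ℝ) * ε₂))
      (PsiSet f c) ≤ ε₁ + ε₂ := by
  have hεpos : (0:ℝ) < ε₁ + ε₂ := by positivity
  apply Real.iSup_le _ hεpos.le
  rintro ⟨μ, hμ0, hμ1, hμE⟩
  set E : ℝ := ∑ x : Bool × S, μ x * (f x.2 + if x.1 then 1 else 0) with hE
  -- bounded below by 0
  have hbdd : BddBelow (Set.range fun ν : (PsiSet f c) => sqH μ (ν : Bool × S → ℝ)) := by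
    refine ⟨0, ?_⟩
    rintro _ ⟨⟨ν, hν0, hν1, hνE⟩, rfl⟩
    exact sqH_nonneg_aux μ ν hμ0 hμ1 hν0 hν1
  -- key bound : c - E ≤ ε₁ + ε₂
  have hcE : c - E ≤ ε₁ + ε₂ := by
    have hfle : ∀ s, (1 : ℝ) - (⌊(1 - f s) / ε₁⌋ : ℝ) * ε₁ ≤ f s + ε₁ := by
      intro s
      have h' : (1 - f s) / ε₁ - 1 ≤ (⌊(1 - f s) / ε₁⌋ : ℝ) :=
        le_of_lt (Int.sub_one_lt_floor _)
      have h2' : ((1 - f s) / ε₁ - 1) * ε₁ ≤ (⌊(1 - f s) / ε₁⌋ : ℝ) * ε₁ :=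
        mul_le_mul_of_nonneg_right h' h1.le
      rw [sub_mul, div_mul_cancel₀ _ h1.ne'] at h2'
      linarith
    have hsum_le : ∑ x : Bool × S,
        μ x * ((1 - (⌊(1 - f x.2) / ε₁⌋ : ℝ) * ε₁) + if x.1 then (1:ℝ) else 0)
        ≤ E + ε₁ := by
      have step : ∀ x : Bool × S,
          μ x * ((1 - (⌊(1 - f x.2) / ε₁⌋ : ℝ) * ε₁) + if x.1 then (1:ℝ) else 0)
          ≤ μ x * (f x.2 + if x.1 then 1 else 0) + μ x * ε₁ := by
        intro x
        have := hfle x.2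
        have hx := hμ0 x
        nlinarith [this, hx]
      calc ∑ x : Bool × S, μ x * ((1 - (⌊(1 - f x.2) / ε₁⌋ : ℝ) * ε₁) + if x.1 then (1:ℝ) else 0)
          ≤ ∑ x : Bool × S, (μ x * (f x.2 + if x.1 then 1 else 0) + μ x * ε₁) :=
            Finset.sum_le_sum fun x _ => step x
        _ = E + ε₁ := by
            rw [Finset.sum_add_distrib, ← Finset.sum_mul, hμ1, ← hE]; ring
    have hcc : c - ε₂ ≤ (⌊c / ε₂⌋ : ℝ) * ε₂ := by
      have h' : c / ε₂ - 1 ≤ (⌊c / ε₂⌋ : ℝ) := le_of_lt (Int.sub_one_lt_floor _)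
      have h2' : (c / ε₂ - 1) * ε₂ ≤ (⌊c / ε₂⌋ : ℝ) * ε₂ :=
        mul_le_mul_of_nonneg_right h' h2.le
      rw [sub_mul, div_mul_cancel₀ _ h2.ne'] at h2'
      linarith
    linarith [hμE, hsum_le, hcc]
  by_cases hEc : c ≤ E
  · -- μ itself is in PsiSet f c
    refine ciInf_le_of_le hbdd ⟨μ, hμ0, hμ1, hEc.trans hE.le⟩ ?_
    have hz : sqH μ μ = 0 := by
      unfold sqH
      rw [Finset.sum_congr rfl fun x _ => Real.sqrt_mul_self (hμ0 x), hμ1]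
      ring
    simpa [hz] using hεpos.le
  · push_neg at hEc
    set T : ℝ := ∑ s, μ (true, s) with hT
    set P : ℝ := ∑ s, μ (false, s) with hP
    have hPT : T + P = 1 := by
      have h := hμ1
      rw [Fintype.sum_prod_type, Fintype.sum_bool] at h
      exact h
    have hEsplit : E = ∑ s, μ (true, s) * (f s + 1) + ∑ s, μ (false, s) * f s := by
      rw [hE, Fintype.sum_prod_type, Fintype.sum_bool]
      simp
    have hTE : T ≤ E := by
      have h1' : T ≤ ∑ s, μ (true, s) * (f s + 1) := by
        rw [hT]
        refine Finset.sum_le_sum fun s _ => ?_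
        exact le_mul_of_one_le_right (hμ0 _) (by linarith [(hf s).1])
      have h2' : (0:ℝ) ≤ ∑ s, μ (false, s) * f s :=
        Finset.sum_nonneg fun s _ => mul_nonneg (hμ0 _) (hf s).1
      linarith [hEsplit]
    have hPpos : 0 < P := by linarith [hPT, hTE, hEc, hc.2]
    set δ : ℝ := (c - E) / P with hδ
    have hδ0 : 0 ≤ δ := div_nonneg (by linarith) hPpos.le
    have hδ1 : δ ≤ 1 := (div_le_one hPpos).2 (by linarith [hPT, hTE, hc.2])
    have hδP : δ * P = c - E := div_mul_cancel₀ _ hPpos.ne'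
    set ν : Bool × S → ℝ :=
      fun x => if x.1 then μ x + δ * μ (false, x.2) else (1 - δ) * μ x with hν
    have hν0 : ∀ x, 0 ≤ ν x := by
      rintro ⟨b, s⟩
      cases b <;> simp only [hν, if_true, if_false, Bool.false_eq_true]
      · exact mul_nonneg (by linarith) (hμ0 _)
      · exact add_nonneg (hμ0 _) (mul_nonneg hδ0 (hμ0 _))
    have hνtrue : ∀ s, ν (true, s) = μ (true, s) + δ * μ (false, s) := fun s => rfl
    have hνfalse : ∀ s, ν (false, s) = (1 - δ) * μ (false, s) := fun s => rfl
    have hν1 : ∑ x, ν x = 1 := by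
      rw [Fintype.sum_prod_type, Fintype.sum_bool]
      have e1 : ∑ s, ν (true, s) = T + δ * P := by
        simp only [hνtrue]
        rw [Finset.sum_add_distrib, ← Finset.mul_sum]
      have e2 : ∑ s, ν (false, s) = (1 - δ) * P := by
        simp only [hνfalse]
        rw [← Finset.mul_sum]
      rw [e1, e2]; linarith [hPT]
    have hνE : c ≤ ∑ x : Bool × S, ν x * (f x.2 + if x.1 then 1 else 0) := by
      have hsplit : ∑ x : Bool × S, ν x * (f x.2 + if x.1 then 1 else 0)
          = ∑ s, ν (true, s) * (f s + 1) + ∑ s, ν (false, s) * f s := by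
        rw [Fintype.sum_prod_type, Fintype.sum_bool]
        simp
      have e1 : ∑ s, ν (true, s) * (f s + 1)
          = ∑ s, μ (true, s) * (f s + 1) + ∑ s, δ * (μ (false, s) * (f s + 1)) := by
        rw [← Finset.sum_add_distrib]
        exact Finset.sum_congr rfl fun s _ => by rw [hνtrue]; ring
      have e2 : ∑ s, ν (false, s) * f s
          = ∑ s, μ (false, s) * f s - ∑ s, δ * (μ (false, s) * f s) := by
        rw [← Finset.sum_sub_distrib]
        exact Finset.sum_congr rfl fun s _ => by rw [hνfalse]; ring
      have e3 : ∑ s, δ * (μ (false, s) * (f s + 1)) - ∑ s, δ * (μ (false, s) * f s)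
          = δ * P := by
        rw [← Finset.sum_sub_distrib]
        rw [Finset.sum_congr rfl fun s _ => (by ring :
          δ * (μ (false, s) * (f s + 1)) - δ * (μ (false, s) * f s) = δ * μ (false, s))]
        rw [← Finset.mul_sum]
      rw [hsplit, e1, e2]
      have : ∑ s, μ (true, s) * (f s + 1) + ∑ s, μ (false, s) * f s = E := hEsplit.symm
      linarith [hδP, e3, this]
    refine ciInf_le_of_le hbdd ⟨ν, hν0, hν1, hνE⟩ ?_
    -- bound sqH μ ν ≤ c - E ≤ ε₁ + ε₂
    have hptwise : ∀ x : Bool × S,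
        (if x.1 then μ x else (1 - δ) * μ x) ≤ Real.sqrt (μ x * ν x) := by
      rintro ⟨b, s⟩
      cases b
      · simp only [Bool.false_eq_true, if_false, hνfalse]
        have hx := hμ0 (false, s)
        have hd : (0:ℝ) ≤ 1 - δ := by linarith
        have hsq : Real.sqrt (μ (false, s) * ((1 - δ) * μ (false, s))) ^ 2
            = μ (false, s) * ((1 - δ) * μ (false, s)) :=
          Real.sq_sqrt (mul_nonneg hx (mul_nonneg hd hx))
        nlinarith [Real.sqrt_nonneg (μ (false, s) * ((1 - δ) * μ (false, s))), hsq,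
          mul_nonneg hd hx, mul_nonneg (mul_nonneg hd hd) (mul_nonneg hx hx)]
      · simp only [if_true, hνtrue]
        have hx := hμ0 (true, s)
        have hy := hμ0 (false, s)
        have hsq : Real.sqrt (μ (true, s) * (μ (true, s) + δ * μ (false, s))) ^ 2
            = μ (true, s) * (μ (true, s) + δ * μ (false, s)) :=
          Real.sq_sqrt (mul_nonneg hx (add_nonneg hx (mul_nonneg hδ0 hy)))
        nlinarith [Real.sqrt_nonneg (μ (true, s) * (μ (true, s) + δ * μ (false, s))), hsq,
          mul_nonneg hδ0 hy, mul_nonneg hx (mul_nonneg hδ0 hy)]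
    have hsum_ge : 1 - δ * P ≤ ∑ x : Bool × S, Real.sqrt (μ x * ν x) := by
      have h' : ∑ x : Bool × S, (if x.1 then μ x else (1 - δ) * μ x)
          ≤ ∑ x : Bool × S, Real.sqrt (μ x * ν x) :=
        Finset.sum_le_sum fun x _ => hptwise x
      have h'' : ∑ x : Bool × S, (if x.1 then μ x else (1 - δ) * μ x)
          = T + (1 - δ) * P := by
        rw [Fintype.sum_prod_type, Fintype.sum_bool]
        simp only [if_true, Bool.false_eq_true, if_false]
        rw [← Finset.mul_sum, ← hT, ← hP]
      rw [h''] at h'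
      linarith [hPT]
    unfold sqH
    linarith [hsum_ge, hδP, hcE]
end
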